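/- Let Γ be a countable group, π an orthogonal representation of Γ on a real Hilbert space H_ℝ, S a family of subgroups of Γ, and b : Γ → H_ℝ a 1-cocycle for π. Assume that π is mixing relative to S and that b is bounded on every subgroup Σ ∈ S. Let (g_n) be a sequence in Γ tending to infinity relative to S and let κ ≥ 0 satisfy ‖b(g_n)‖ ≤ κ for all n. If h ∈ Γ is such that the sequence (g_n h g_n⁻¹) does NOT tend to infinity relative to S, then ‖b(h)‖ ≤ 2κ. -/

import Mathlib

open scoped RealInnerProductSpace

/-- `b` is a 1-cocycle for the orthogonal representation `π`. -/
def IsCocycle {G : Type*} [Group G] {V : Type*} [NormedAddCommGroup V]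
    [InnerProductSpace ℝ V] (π : G →* (V ≃ₗᵢ[ℝ] V)) (b : G → V) : Prop :=
  ∀ g h : G, b (g * h) = b g + π g (b h)

/-- `F` is small relative to the family `S` of subgroups: it is contained in a finite
union of double cosets `g Σ h`. -/
def SmallRel {G : Type*} [Group G] (S : Set (Subgroup G)) (F : Set G) : Prop :=
  ∃ (n : ℕ) (g h : Fin n → G) (Sigs : Fin n → Subgroup G),
    (∀ i, Sigs i ∈ S) ∧ F ⊆ ⋃ i, (fun s => g i * s * h i) '' (Sigs i : Set G)

/-- `π` is mixing relative to the family `S` of subgroups. -/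
def MixingRel {G : Type*} [Group G] {V : Type*} [NormedAddCommGroup V]
    [InnerProductSpace ℝ V] (π : G →* (V ≃ₗᵢ[ℝ] V)) (S : Set (Subgroup G)) : Prop :=
  ∀ (ξ η : V) (ε : ℝ), 0 < ε → ∃ F : Set G, SmallRel S F ∧
    ∀ g : G, g ∉ F → |⟪π g ξ, η⟫| < ε

/-- The sequence `g` tends to infinity relative to the family `S` of subgroups. -/
def TendsToInftyRel {G : Type*} [Group G] (S : Set (Subgroup G)) (g : ℕ → G) : Prop :=
  ∀ F : Set G, SmallRel S F → ∀ᶠ n in Filter.atTop, g n ∉ F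

/-- The cocycle `b` is bounded on the subset `T`. -/
def BoundedOn {G : Type*} [Group G] {V : Type*} [NormedAddCommGroup V]
    [InnerProductSpace ℝ V] (b : G → V) (T : Set G) : Prop :=
  ∃ C : ℝ, ∀ g ∈ T, ‖b g‖ ≤ C


section Aux
variable {G : Type*} [Group G] {V : Type*} [NormedAddCommGroup V] [InnerProductSpace ℝ V]
  {π : G →* (V ≃ₗᵢ[ℝ] V)} {b : G → V} {S : Set (Subgroup G)}

lemma pi_mul (π : G →* (V ≃ₗᵢ[ℝ] V)) (s t : G) (x : V) : π (s*t) x = π s (π t x) := by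
  rw [map_mul]; rfl

lemma cocycle_one (hb : IsCocycle π b) : b 1 = 0 := by
  have := hb 1 1
  simp only [mul_one, map_one] at this
  have h2 : b 1 + b 1 = b 1 + 0 := by simpa using this.symm
  exact (add_left_cancel h2)

lemma cocycle_inv (hb : IsCocycle π b) (s : G) : b s⁻¹ = - π s⁻¹ (b s) := by
  have := hb s⁻¹ s
  rw [inv_mul_cancel, cocycle_one hb] at this
  have := this.symm
  rw [add_eq_zero_iff_eq_neg] at this
  exact this

lemma approx_fixed (hb : IsCocycle π b) (K : Subgroup G) (C : ℝ)
    (hC : ∀ σ ∈ K, ‖b σ‖ ≤ C) {δ : ℝ} (hδ : 0 < δ) :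
    ∃ v : V, ∀ σ ∈ K, ‖b σ + π σ v - v‖ ≤ δ := by
  haveI : Nonempty K := ⟨1⟩
  set f : V → ℝ := fun x => ⨆ σ : K, ‖x - b σ‖ ^ 2 with hf
  have hC0 : 0 ≤ C := le_trans (by simp [cocycle_one hb]) (hC 1 K.one_mem)
  have hbdd : ∀ x : V, BddAbove (Set.range fun σ : K => ‖x - b σ‖ ^ 2) := by
    intro x
    refine ⟨(‖x‖ + C) ^ 2, ?_⟩
    rintro y ⟨σ, rfl⟩
    have h1 : ‖x - b σ‖ ≤ ‖x‖ + C :=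
      le_trans (norm_sub_le _ _) (by linarith [hC σ σ.2])
    have h2 := norm_nonneg (x - b σ)
    simp only []
    nlinarith [mul_self_nonneg (‖x‖ + C - ‖x - b σ‖)]
  -- each term ≤ f x
  have hle : ∀ (x : V) (σ : K), ‖x - b σ‖ ^ 2 ≤ f x := fun x σ => le_ciSup (hbdd x) σ
  have hf0 : ∀ x, 0 ≤ f x := fun x =>
    le_trans (sq_nonneg ‖x - b (1 : K)‖) (hle x 1)
  -- invariance in one direction: f x ≤ f (π σ x + b σ)
  have hkey : ∀ (σ : K) (x : V) (τ : K),
      (π σ : V ≃ₗᵢ[ℝ] V) x + b σ - b ((σ * τ : K) : G) = π (σ : G) ((x : V) - b τ) := by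
    intro σ x τ
    have : b ((σ : G) * (τ : G)) = b σ + π (σ : G) (b τ) := hb σ τ
    push_cast
    rw [this, map_sub]
    abel
  -- one-directional monotonicity: f x ≤ f (π σ x + b σ)
  have hmono : ∀ (σ : K) (x : V), f x ≤ f ((π (σ : G) : V ≃ₗᵢ[ℝ] V) x + b σ) := by
    intro σ x
    refine ciSup_le fun τ => ?_
    have h1 : ‖x - b τ‖ ^ 2 = ‖(π (σ : G) : V ≃ₗᵢ[ℝ] V) x + b σ - b ((σ * τ : K) : G)‖ ^ 2 := by
      rw [hkey σ x τ, LinearIsometryEquiv.norm_map]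
    rw [h1]
    exact hle _ (σ * τ)
  -- the inverse composition returns to x
  have hback : ∀ (σ : K) (x : V),
      (π ((σ : G)⁻¹) : V ≃ₗᵢ[ℝ] V) ((π (σ : G) : V ≃ₗᵢ[ℝ] V) x + b σ) + b ((σ : G)⁻¹) = x := by
    intro σ x
    rw [cocycle_inv hb, map_add]
    have : (π ((σ:G)⁻¹) : V ≃ₗᵢ[ℝ] V) ((π (σ : G) : V ≃ₗᵢ[ℝ] V) x) = x := by
      rw [← pi_mul π, inv_mul_cancel, map_one]; rfl
    rw [this]; abel
  -- so f is invariant in the other direction too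
  have hmono' : ∀ (σ : K) (x : V), f ((π (σ : G) : V ≃ₗᵢ[ℝ] V) x + b σ) ≤ f x := by
    intro σ x
    have h1 := hmono σ⁻¹ ((π (σ : G) : V ≃ₗᵢ[ℝ] V) x + b σ)
    have h2 : ((σ⁻¹ : K) : G) = (σ : G)⁻¹ := rfl
    rw [h2, hback σ x] at h1
    exact h1
  -- choose a near-minimizer
  set r : ℝ := ⨅ x : V, f x with hr
  have hbdd_below : BddBelow (Set.range f) := ⟨0, by rintro y ⟨x, rfl⟩; exact hf0 x⟩
  have hrle : ∀ x, r ≤ f x := fun x => ciInf_le hbdd_below x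
  have hlt : r < r + δ ^ 2 / 4 := by nlinarith
  obtain ⟨v, hv⟩ := exists_lt_of_ciInf_lt hlt
  refine ⟨v, fun σ0 hσ0 => ?_⟩
  set σ : K := ⟨σ0, hσ0⟩
  set w : V := (π (σ : G) : V ≃ₗᵢ[ℝ] V) v + b σ with hwdef
  have hfw : f w < r + δ ^ 2 / 4 := lt_of_le_of_lt (hmono' σ v) hv
  set m : V := (2⁻¹ : ℝ) • (v + w) with hmdef
  have hfm : f m ≤ f v / 2 + f w / 2 - ‖v - w‖ ^ 2 / 4 := by
    refine ciSup_le fun τ => ?_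
    have hmrep : m - b τ = (2⁻¹ : ℝ) • ((v - b τ) + (w - b τ)) := by
      rw [hmdef]; module
    have hpar := parallelogram_law_with_norm ℝ (v - b τ) (w - b τ)
    have hsub : (v - b τ) - (w - b τ) = v - w := by abel
    rw [hsub] at hpar
    have hnm : ‖m - b τ‖ = 2⁻¹ * ‖(v - b τ) + (w - b τ)‖ := by
      rw [hmrep, norm_smul]; norm_num
    have h1 := hle v τ
    have h2 := hle w τ
    rw [hnm]
    nlinarith [norm_nonneg ((v - b τ) + (w - b τ))]
  have hrm : r ≤ f m := hrle m
  have hpv : ‖v - w‖ ^ 2 < δ ^ 2 := by nlinarith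
  have : ‖v - w‖ ≤ δ := by nlinarith [norm_nonneg (v - w)]
  have hfin : b σ0 + (π σ0) v - v = w - v := by
    show b σ0 + (π σ0) v - v = (π σ0) v + b σ0 - v
    abel
  rw [hfin, norm_sub_rev]
  exact this

lemma smallRel_translate {F : Set G} (hF : SmallRel S F) (s t : G) :
    SmallRel S ((fun x => s * x * t) '' F) := by
  obtain ⟨n, a, c, Sigs, hmem, hsub⟩ := hF
  refine ⟨n, fun i => s * a i, fun i => c i * t, Sigs, hmem, ?_⟩
  rintro y ⟨x, hx, rfl⟩
  obtain ⟨i, hi⟩ := Set.mem_iUnion.1 (hsub hx)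
  obtain ⟨σ, hσ, rfl⟩ := hi
  exact Set.mem_iUnion.2 ⟨i, ⟨σ, hσ, by group⟩⟩

lemma tendsToInftyRel_translate {g : ℕ → G} (hg : TendsToInftyRel S g) (s t : G) :
    TendsToInftyRel S (fun n => s * g n * t) := by
  intro F hF
  have h2 := hg _ (smallRel_translate hF s⁻¹ t⁻¹)
  filter_upwards [h2] with n hn hmem
  exact hn ⟨s * g n * t, hmem, by group⟩

end Aux

/-- Case 1 of the argument. If `(g_n)` tends to infinity relative to `S`,
`‖b(g_n)‖ ≤ κ` for all `n`, and `(g_n h g_n⁻¹)` does not tend to infinity relative to `S`,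
then `‖b(h)‖ ≤ 2κ`. -/
theorem statement1 {G : Type*} [Group G] [Countable G]
    {V : Type*} [NormedAddCommGroup V] [InnerProductSpace ℝ V] [CompleteSpace V]
    (π : G →* (V ≃ₗᵢ[ℝ] V)) (S : Set (Subgroup G)) (b : G → V)
    (hb : IsCocycle π b) (hmix : MixingRel π S)
    (hbddS : ∀ Sg ∈ S, BoundedOn b (Sg : Set G))
    (g : ℕ → G) (hginf : TendsToInftyRel S g)
    (κ : ℝ) (hκ : 0 ≤ κ) (hgb : ∀ n, ‖b (g n)‖ ≤ κ)
    (h : G) (hh : ¬ TendsToInftyRel S (fun n => g n * h * (g n)⁻¹)) :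
    ‖b h‖ ≤ 2 * κ := by
  classical
  rw [TendsToInftyRel] at hh
  push_neg at hh
  obtain ⟨F, hFsmall, hFfreq⟩ := hh
  obtain ⟨m, a, c, Sigs, hmem, hsub⟩ := hFsmall
  have hpig : ∃ i : Fin m, ∃ᶠ n in Filter.atTop,
      g n * h * (g n)⁻¹ ∈ (fun s => a i * s * c i) '' (Sigs i : Set G) := by
    by_contra hcon
    push_neg at hcon
    obtain ⟨n, hn1, hn2⟩ := (hFfreq.and_eventually (Filter.eventually_all.2 hcon)).exists
    obtain ⟨i, hi⟩ := Set.mem_iUnion.1 (hsub hn1)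
    exact hn2 i hi
  obtain ⟨i, hfreq⟩ := hpig
  set a0 := a i with ha0
  set c0 := c i with hc0
  set K := Sigs i with hK
  obtain ⟨C, hC⟩ := hbddS K (hmem i)
  set ξ := b h with hξdef
  by_cases hξ0 : ξ = 0
  · rw [hξ0, norm_zero]; positivity
  have hξpos : 0 < ‖ξ‖ := norm_pos_iff.2 hξ0
  have key : ∀ ε > 0, ‖ξ‖ ^ 2 ≤ 2 * κ * ‖ξ‖ + ε := by
    intro ε hε
    set ε' := ε / 8 with hε'def
    have hε'pos : 0 < ε' := by positivity
    set δ := ε / (8 * (‖ξ‖ + 1)) with hδdef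
    have hδpos : 0 < δ := by positivity
    obtain ⟨v, hv⟩ := approx_fixed hb K C hC hδpos
    obtain ⟨F1, hF1s, hF1⟩ := hmix ξ (b a0) ε' hε'pos
    obtain ⟨F2, hF2s, hF2⟩ := hmix ξ v ε' hε'pos
    obtain ⟨F3, hF3s, hF3⟩ := hmix ξ (b c0) ε' hε'pos
    have E1 := hginf F1 hF1s
    have E2 : ∀ᶠ n in Filter.atTop, a0⁻¹ * g n ∉ F2 := by
      have := (tendsToInftyRel_translate hginf a0⁻¹ 1) F2 hF2s
      simpa using this
    have E3 : ∀ᶠ n in Filter.atTop, c0 * g n * h⁻¹ ∉ F2 :=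
      (tendsToInftyRel_translate hginf c0 h⁻¹) F2 hF2s
    have E4 : ∀ᶠ n in Filter.atTop, c0 * g n * h⁻¹ ∉ F3 :=
      (tendsToInftyRel_translate hginf c0 h⁻¹) F3 hF3s
    obtain ⟨n, hnx, ⟨⟨hn1, hn2⟩, hn3, hn4⟩⟩ :=
      (hfreq.and_eventually ((E1.and E2).and (E3.and E4))).exists
    obtain ⟨σ0, hσ0K, hσ0⟩ := hnx
    set gn := g n with hgn
    set xn := gn * h * gn⁻¹ with hxn
    replace hσ0 : a0 * σ0 * c0 = xn := hσ0
    -- hσ0 : a0 * σ0 * c0 = xn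
    have hσval : σ0 = a0⁻¹ * xn * c0⁻¹ := by rw [← hσ0]; group
    have he : ‖b σ0 + π σ0 v - v‖ ≤ δ := hv σ0 hσ0K
    set e := b σ0 + π σ0 v - v with hedef
    have hbσ : b σ0 = v - π σ0 v + e := by rw [hedef]; abel
    -- cocycle identities
    have e1 : b (xn * gn) = b xn + π xn (b gn) := hb xn gn
    have e2 : xn * gn = gn * h := by rw [hxn]; group
    rw [e2, hb gn h, ← hξdef] at e1
    have id1 : π gn ξ = b xn + π xn (b gn) - b gn := by
      rw [← e1, add_sub_cancel_left]
    have id2 : b xn = b a0 + π a0 (b σ0) + π a0 (π σ0 (b c0)) := by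
      rw [← hσ0, show a0 * σ0 * c0 = a0 * (σ0 * c0) by group, hb a0 (σ0 * c0),
        hb σ0 c0, map_add]
      abel
    have idfull : π gn ξ = b a0 + π a0 v - π a0 (π σ0 v) + π a0 e
        + π a0 (π σ0 (b c0)) + π xn (b gn) - b gn := by
      rw [id1, id2, hbσ, map_add, map_sub]
      abel
    set η := π gn ξ with hηdef
    have hiso : ⟪η, η⟫ = ‖ξ‖ ^ 2 := by
      rw [hηdef, (π gn).inner_map_map, real_inner_self_eq_norm_sq]
    have expand : ‖ξ‖ ^ 2 = ⟪η, b a0⟫ + ⟪η, π a0 v⟫ - ⟪η, π a0 (π σ0 v)⟫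
        + ⟪η, π a0 e⟫ + ⟪η, π a0 (π σ0 (b c0))⟫ + ⟪η, π xn (b gn)⟫ - ⟪η, b gn⟫ := by
      rw [← hiso]
      nth_rewrite 2 [idfull]
      simp only [inner_add_right, inner_sub_right]
    -- rewrite the mixing terms
    have hgrp2 : a0 * (a0⁻¹ * gn) = gn := by group
    have t2eq : ⟪η, π a0 v⟫ = ⟪π (a0⁻¹ * gn) ξ, v⟫ := by
      rw [hηdef, show π gn ξ = π a0 (π (a0⁻¹ * gn) ξ) by rw [← pi_mul, hgrp2],
        (π a0).inner_map_map]
    have hgrp3 : a0 * σ0 * (c0 * gn * h⁻¹) = gn := by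
      rw [hσval, hxn]; group
    have hrw3 : π gn ξ = π a0 (π σ0 (π (c0 * gn * h⁻¹) ξ)) := by
      rw [← pi_mul, ← pi_mul, hgrp3]
    have t3eq : ⟪η, π a0 (π σ0 v)⟫ = ⟪π (c0 * gn * h⁻¹) ξ, v⟫ := by
      rw [hηdef, hrw3, (π a0).inner_map_map, (π σ0).inner_map_map]
    have t5eq : ⟪η, π a0 (π σ0 (b c0))⟫ = ⟪π (c0 * gn * h⁻¹) ξ, b c0⟫ := by
      rw [hηdef, hrw3, (π a0).inner_map_map, (π σ0).inner_map_map]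
    -- bounds
    have hT1 : |⟪η, b a0⟫| < ε' := by
      have := hF1 gn hn1
      rwa [← hηdef] at this
    have hT2 : |⟪π (a0⁻¹ * gn) ξ, v⟫| < ε' := hF2 _ hn2
    have hT3 : |⟪π (c0 * gn * h⁻¹) ξ, v⟫| < ε' := hF2 _ hn3
    have hT5 : |⟪π (c0 * gn * h⁻¹) ξ, b c0⟫| < ε' := hF3 _ hn4
    have hnormη : ‖η‖ = ‖ξ‖ := by rw [hηdef, LinearIsometryEquiv.norm_map]
    have hT4 : |⟪η, π a0 e⟫| ≤ ‖ξ‖ * δ := by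
      refine le_trans (abs_real_inner_le_norm _ _) ?_
      rw [hnormη, LinearIsometryEquiv.norm_map]
      exact mul_le_mul_of_nonneg_left he (norm_nonneg ξ)
    have hT6 : |⟪η, π xn (b gn)⟫| ≤ ‖ξ‖ * κ := by
      refine le_trans (abs_real_inner_le_norm _ _) ?_
      rw [hnormη, LinearIsometryEquiv.norm_map]
      exact mul_le_mul_of_nonneg_left (hgb n) (norm_nonneg ξ)
    have hT7 : |⟪η, b gn⟫| ≤ ‖ξ‖ * κ := by
      refine le_trans (abs_real_inner_le_norm _ _) ?_
      rw [hnormη]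
      exact mul_le_mul_of_nonneg_left (hgb n) (norm_nonneg ξ)
    have hd : ‖ξ‖ * δ ≤ ε / 8 := by
      rw [hδdef, mul_div_assoc', div_le_div_iff₀ (by positivity) (by norm_num : (0:ℝ) < 8)]
      nlinarith
    rw [expand, t2eq, t3eq, t5eq]
    have hε'val : ε' = ε / 8 := hε'def
    obtain ⟨hT1a, hT1b⟩ := abs_lt.1 hT1
    obtain ⟨hT2a, hT2b⟩ := abs_lt.1 hT2
    obtain ⟨hT3a, hT3b⟩ := abs_lt.1 hT3
    obtain ⟨hT5a, hT5b⟩ := abs_lt.1 hT5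
    obtain ⟨hT4a, hT4b⟩ := abs_le.1 hT4
    obtain ⟨hT6a, hT6b⟩ := abs_le.1 hT6
    obtain ⟨hT7a, hT7b⟩ := abs_le.1 hT7
    linarith
  have h2 : ‖ξ‖ ^ 2 ≤ 2 * κ * ‖ξ‖ := le_of_forall_pos_le_add key
  nlinarith
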